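/- arXiv:2009.01024 — 3 statements merged into one kernel-verified Lean document; each statement's English description precedes it below -/
import Mathlib

section
/- The number of matchings of [2n] avoiding the pattern 1122 (i.e., permutational matchings) equals n!. -/
/-- A (perfect) matching on `Fin m`: a fixed-point-free involution. -/
def IsMatching {m : ℕ} (f : Fin m → Fin m) : Prop :=
  Function.Involutive f ∧ ∀ i, f i ≠ i

/-- The pattern `σ` occurs in `τ`. -/
def Occurs {m M : ℕ} (σ : Fin m → Fin m) (τ : Fin M → Fin M) : Prop :=
  ∃ g : Fin m → Fin M, StrictMono g ∧ ∀ p, τ (g p) = g (σ p)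

def Avoids {m M : ℕ} (σ : Fin m → Fin m) (τ : Fin M → Fin M) : Prop :=
  ¬ Occurs σ τ

def juxt {m M : ℕ} (σ : Fin m → Fin m) (τ : Fin M → Fin M) :
    Fin (m + M) → Fin (m + M) :=
  fun i => finSumFinEquiv (Sum.map σ τ (finSumFinEquiv.symm i))

def liftMatching {m : ℕ} (σ : Fin m → Fin m) : Fin (m + 2) → Fin (m + 2) := fun i =>
  if _ : i.val = 0 then ⟨m + 1, by omega⟩
  else if _ : i.val = m + 1 then ⟨0, by omega⟩
  else ⟨(σ ⟨i.val - 1, by have := i.isLt; omega⟩).val + 1, by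
    have := (σ ⟨i.val - 1, by have := i.isLt; omega⟩).isLt; omega⟩

/-- `τ` contains `σ`, but deleting the rightmost edge of `τ` (the edge containing the
last vertex) destroys every occurrence of `σ`. -/
def MinContains {m M : ℕ} (σ : Fin m → Fin m) (τ : Fin M → Fin M) : Prop :=
  Occurs σ τ ∧ ¬ ∃ g : Fin m → Fin M, StrictMono g ∧ (∀ p, τ (g p) = g (σ p)) ∧
    ∀ p, (g p : ℕ) ≠ M - 1 ∧ (τ (g p) : ℕ) ≠ M - 1

def ConnectedMatching {m : ℕ} (f : Fin m → Fin m) : Prop :=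
  0 < m ∧ ¬ ∃ h : ℕ, 0 < h ∧ h < m ∧ ∀ i : Fin m, ((i : ℕ) < h ↔ ((f i : ℕ) < h))

def HasCrossing {m : ℕ} (f : Fin m → Fin m) : Prop :=
  ∃ a b : Fin m, a < b ∧ b < f a ∧ f a < f b

def p1122 : Fin 4 → Fin 4 := ![1, 0, 3, 2]
def p1212 : Fin 4 → Fin 4 := ![2, 3, 0, 1]
def p1221 : Fin 4 → Fin 4 := ![3, 2, 1, 0]

/-!
If a matching has an opener `a` (with `a < f a`) to the right of a closer `b` (with `f b < b`),
the arcs `{f b, b}` and `{a, f a}` form an occurrence of `1122`. So in an avoiding matching every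
opener precedes every closer; as `f` maps the openers bijectively onto the closers, the openers are
exactly the first half `[0, n)`, i.e. the matching is permutational. Conversely a permutational
matching of `[2n]` avoids `1122`, and it is the same thing as a permutation of `[n]`.
-/

open Finset

theorem occurs_p1122_iff {m : ℕ} {f : Fin m → Fin m} (hf : Function.Involutive f) :
    Occurs p1122 f ↔ ∃ a b, a < f a ∧ f a < b ∧ b < f b := by
  constructor
  · rintro ⟨g, hg, hgf⟩
    have h01 : f (g 0) = g 1 := hgf 0
    have h23 : f (g 2) = g 3 := hgf 2
    exact ⟨g 0, g 2, by rw [h01]; exact hg (by decide), by rw [h01]; exact hg (by decide),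
      by rw [h23]; exact hg (by decide)⟩
  · rintro ⟨a, b, hab, hba, hbb⟩
    refine ⟨![a, f a, b, f b], ?_, ?_⟩
    · refine Fin.strictMono_iff_lt_succ.2 fun i => ?_
      fin_cases i
      exacts [hab, hba, hbb]
    · intro p
      fin_cases p <;> simp [p1122, hf a, hf b]

theorem IsMatching.two_mul_card_openers {m : ℕ} {f : Fin m → Fin m} (hf : IsMatching f) :
    2 * #{i | i < f i} = m := by
  set O : Finset (Fin m) := {i | i < f i}
  have himage : O.image f = Oᶜ := by
    ext j
    simp only [O, mem_image, mem_compl, mem_filter, mem_univ, true_and, not_lt]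
    constructor
    · rintro ⟨i, hi, rfl⟩
      rw [hf.1 i]; exact hi.le
    · intro hj
      exact ⟨f j, by rw [hf.1 j]; exact lt_of_le_of_ne hj (hf.2 j), hf.1 j⟩
  calc 2 * #O = #O + #Oᶜ := by rw [← himage, card_image_of_injective O hf.1.injective, two_mul]
    _ = m := by rw [card_add_card_compl, Fintype.card_fin]

theorem Fin.mem_iff_val_lt_card_of_forall_lt {m : ℕ} {s : Finset (Fin m)}
    (h : ∀ a ∈ s, ∀ b ∉ s, a < b) (i : Fin m) : i ∈ s ↔ (i : ℕ) < #s := by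
  constructor
  · intro hi
    have hsub : Iic i ⊆ s := fun j hj => by
      by_contra hjs
      exact (mem_Iic.1 hj).not_gt (h i hi j hjs)
    simpa [Fin.card_Iic] using card_le_card hsub
  · intro hi
    by_contra hns
    have hsub : s ⊆ Iio i := fun a ha => mem_Iio.2 (h a ha i hns)
    exact hi.not_ge ((card_le_card hsub).trans_eq (Fin.card_Iio i))

/-- Vertices are `0, …, 2n-1`, so the paper's first half `{1, …, n}` is `i < n`. -/
def IsPermutational {n : ℕ} (f : Fin (n + n) → Fin (n + n)) : Prop :=
  ∀ i : Fin (n + n), (i : ℕ) < n ↔ n ≤ (f i : ℕ)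

theorem IsPermutational.avoids {n : ℕ} {f : Fin (n + n) → Fin (n + n)} (hp : IsPermutational f)
    (hf : Function.Involutive f) : Avoids p1122 f := by
  rw [Avoids, occurs_p1122_iff hf]
  rintro ⟨a, b, hab, hba, hbb⟩
  have ha := hp a
  have hb := hp b
  rw [Fin.lt_def] at hab hba hbb
  omega

theorem IsMatching.isPermutational_of_avoids {n : ℕ} {f : Fin (n + n) → Fin (n + n)}
    (hf : IsMatching f) (havoid : Avoids p1122 f) : IsPermutational f := by
  rw [Avoids, occurs_p1122_iff hf.1] at havoid
  push Not at havoid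
  set O : Finset (Fin (n + n)) := {i | i < f i}
  have hsep : ∀ a ∈ O, ∀ b ∉ O, a < b := by
    simp only [O, mem_filter, mem_univ, true_and, not_lt]
    intro a ha b hb
    have hfb : f b < b := lt_of_le_of_ne hb (hf.2 b)
    have hab : a ≠ b := by rintro rfl; exact ha.not_gt hfb
    by_contra! hba
    have hba' : f (f b) < a := by rw [hf.1 b]; exact lt_of_le_of_ne hba hab.symm
    exact (havoid (f b) a (by rwa [hf.1 b]) hba').not_gt ha
  have hcard : #O = n := by have : 2 * #O = n + n := hf.two_mul_card_openers; omega
  have hopener : ∀ i, i < f i ↔ (i : ℕ) < n := fun i => by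
    simpa [O, hcard] using Fin.mem_iff_val_lt_card_of_forall_lt hsep i
  intro i
  have hi := hopener i
  have hfi := hopener (f i)
  rw [hf.1 i] at hfi
  have hne := Fin.val_ne_iff.2 (hf.2 i)
  rw [Fin.lt_def] at hi hfi
  omega

theorem IsMatching.avoids_p1122_iff_isPermutational {n : ℕ} {f : Fin (n + n) → Fin (n + n)}
    (hf : IsMatching f) : Avoids p1122 f ↔ IsPermutational f :=
  ⟨hf.isPermutational_of_avoids, fun hp => hp.avoids hf.1⟩

section PermEquiv

variable {n : ℕ}

open Equiv

def matchingOfPerm (π : Perm (Fin n)) : Fin (n + n) → Fin (n + n) :=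
  Fin.append (Fin.natAdd n ∘ π) (Fin.castAdd n ∘ π.symm)

@[simp]
theorem matchingOfPerm_castAdd (π : Perm (Fin n)) (i : Fin n) :
    matchingOfPerm π (Fin.castAdd n i) = (π i).addNat n :=
  (Fin.append_left _ _ i).trans (Fin.natAdd_eq_addNat n _)

@[simp]
theorem matchingOfPerm_addNat (π : Perm (Fin n)) (i : Fin n) :
    matchingOfPerm π (i.addNat n) = Fin.castAdd n (π.symm i) := by
  rw [← Fin.natAdd_eq_addNat]; exact Fin.append_right _ _ i

theorem isPermutational_matchingOfPerm (π : Perm (Fin n)) : IsPermutational (matchingOfPerm π) :=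
  Fin.addCases (fun i => by simp) (fun i => by simp)

theorem isMatching_matchingOfPerm (π : Perm (Fin n)) : IsMatching (matchingOfPerm π) := by
  refine ⟨Fin.addCases (fun i => by simp) (fun i => by simp), fun i h => ?_⟩
  have := isPermutational_matchingOfPerm π i
  rw [h] at this
  omega

@[simps]
def IsPermutational.toPerm {f : Fin (n + n) → Fin (n + n)} (hp : IsPermutational f)
    (hf : Function.Involutive f) : Perm (Fin n) where
  toFun i := ⟨f (Fin.castAdd n i) - n, by have := (hp (Fin.castAdd n i)).1 (by simp); omega⟩
  invFun j := (f (j.addNat n)).castLT <| by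
    have := hp (j.addNat n)
    simp only [Fin.val_addNat] at this
    omega
  left_inv i := by
    have hi : n ≤ (f (Fin.castAdd n i) : ℕ) := (hp _).1 (by simp)
    refine Fin.ext ?_
    dsimp only
    rw [Fin.val_castLT, show (⟨_, _⟩ : Fin n).addNat n = f (Fin.castAdd n i) from
      Fin.ext (by simp only [Fin.val_addNat]; omega), hf]
    simp
  right_inv j := by
    refine Fin.ext ?_
    dsimp only
    rw [Fin.castAdd_castLT, hf]
    simp

def permEquivPermutational :
    Perm (Fin n) ≃ {f : Fin (n + n) → Fin (n + n) // IsMatching f ∧ IsPermutational f} where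
  toFun π :=
    ⟨matchingOfPerm π, isMatching_matchingOfPerm π, isPermutational_matchingOfPerm π⟩
  invFun f := f.2.2.toPerm f.2.1.1
  left_inv π := Equiv.ext fun i => Fin.ext (by simp)
  right_inv := by
    rintro ⟨f, hf, hp⟩
    refine Subtype.ext <| funext <| Fin.addCases (fun i => Fin.ext ?_) (fun j => ?_)
    · have := (hp (Fin.castAdd n i)).1 (by simp)
      simp only [matchingOfPerm_castAdd, Fin.val_addNat, IsPermutational.toPerm_apply_val]
      omega
    · simp [Fin.castAdd_castLT]

end PermEquiv

theorem card_avoid_1122 (n : ℕ) :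
    Nat.card {f : Fin (2 * n) → Fin (2 * n) // IsMatching f ∧ Avoids p1122 f} =
      Nat.factorial n := by
  rw [two_mul]
  calc Nat.card {f : Fin (n + n) → Fin (n + n) // IsMatching f ∧ Avoids p1122 f}
      = Nat.card {f : Fin (n + n) → Fin (n + n) // IsMatching f ∧ IsPermutational f} :=
        Nat.card_congr <| Equiv.subtypeEquivRight fun _ =>
          and_congr_right IsMatching.avoids_p1122_iff_isPermutational
    _ = Nat.card (Equiv.Perm (Fin n)) := (Nat.card_congr permEquivPermutational).symm
    _ = n.factorial := by rw [Nat.card_perm, Nat.card_eq_fintype_card, Fintype.card_fin]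
end

section
/- The number of matchings of [2n] avoiding the pattern 1221 equals the Catalan number C_n = (1/(n+1))·binom(2n,n). -/
/-! A nonnesting matching `f` is increasing on its set of openers `{i | i < f i}`, so it pairs
the `k`-th opener with the `k`-th closer and is determined by its openers. Conversely, pairing the
`k`-th element of a set `s` with the `k`-th element of its complement yields a matching with
openers `s` exactly when `s` satisfies the ballot condition, i.e. when `s` is the set of up-steps
of a Dyck word. Hence nonnesting matchings of `[2n]` correspond to Dyck words of semilength `n`. -/

open Finset DyckStep

lemma List.count_eq_sum_map_ite {β : Type*} [DecidableEq β] (b : β) (l : List β) :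
    l.count b = (l.map fun x => if x = b then 1 else 0).sum := by
  induction l with
  | nil => simp
  | cons x l ih => simp [List.count_cons, ih, add_comm]

lemma List.count_take_ofFn {m : ℕ} {β : Type*} [DecidableEq β] (w : Fin m → β) (b : β)
    (k : ℕ) : ((List.ofFn w).take k).count b = #{j | j.val < k ∧ w j = b} := by
  rw [List.count_eq_sum_map_ite, List.map_take, List.map_ofFn, List.sum_take_ofFn,
    Finset.card_filter, Finset.sum_filter]
  simp [ite_and]

def openers {α : Type*} [LinearOrder α] [Fintype α] (f : α → α) : Finset α := {i | i < f i}

@[simp] lemma mem_openers {α : Type*} [LinearOrder α] [Fintype α] {f : α → α} {i : α} :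
    i ∈ openers f ↔ i < f i := by
  simp [openers]

namespace Finset

variable {α : Type*} [LinearOrder α] [Fintype α] {s : Finset α} (h : #s = #sᶜ)

def rankIso : s ≃o (sᶜ : Finset α) :=
  (s.orderIsoOfFin h).symm.trans (sᶜ.orderIsoOfFin rfl)

def pairByRank (i : α) : α :=
  if hi : i ∈ s then rankIso h ⟨i, hi⟩ else (rankIso h).symm ⟨i, mem_compl.2 hi⟩

variable {h}

lemma pairByRank_of_mem {i : α} (hi : i ∈ s) : pairByRank h i = rankIso h ⟨i, hi⟩ :=
  dif_pos hi

lemma pairByRank_of_notMem {i : α} (hi : i ∉ s) :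
    pairByRank h i = (rankIso h).symm ⟨i, mem_compl.2 hi⟩ :=
  dif_neg hi

lemma pairByRank_mem_iff {i : α} : pairByRank h i ∈ s ↔ i ∉ s := by
  by_cases hi : i ∈ s
  · simpa [hi, pairByRank_of_mem hi] using mem_compl.1 (rankIso h ⟨i, hi⟩).2
  · simp [hi, pairByRank_of_notMem hi]

lemma pairByRank_involutive : Function.Involutive (pairByRank h) := by
  intro i
  by_cases hi : i ∈ s
  · rw [pairByRank_of_mem hi, pairByRank_of_notMem (mem_compl.1 (rankIso h ⟨i, hi⟩).2)]
    simp
  · rw [pairByRank_of_notMem hi, pairByRank_of_mem ((rankIso h).symm ⟨i, mem_compl.2 hi⟩).2]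
    simp

lemma pairByRank_lt_pairByRank_iff {i j : α} (hij : i ∈ s ↔ j ∈ s) :
    pairByRank h i < pairByRank h j ↔ i < j := by
  by_cases hi : i ∈ s
  · have hj := hij.1 hi
    rw [pairByRank_of_mem hi, pairByRank_of_mem hj, Subtype.coe_lt_coe, OrderIso.lt_iff_lt,
      Subtype.mk_lt_mk]
  · have hj : j ∉ s := hij.not.1 hi
    rw [pairByRank_of_notMem hi, pairByRank_of_notMem hj, Subtype.coe_lt_coe, OrderIso.lt_iff_lt,
      Subtype.mk_lt_mk]

lemma strictMonoOn_pairByRank : StrictMonoOn (pairByRank h) s :=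
  fun _ hi _ hj hij => (pairByRank_lt_pairByRank_iff (iff_of_true hi hj)).2 hij

lemma card_compl_lt_pairByRank {a : α} (ha : a ∈ s) :
    #{y ∈ sᶜ | y < pairByRank h a} = #{y ∈ s | y < a} := by
  have hPa : pairByRank h a ∉ s := fun hPa => pairByRank_mem_iff.1 hPa ha
  refine card_nbij' (pairByRank h) (pairByRank h) ?_ ?_
    (fun y _ => pairByRank_involutive y) (fun y _ => pairByRank_involutive y)
  · intro y hy
    simp only [coe_filter, Set.mem_ofPred_eq, mem_compl] at hy ⊢
    refine ⟨pairByRank_mem_iff.2 hy.1, ?_⟩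
    rw [← pairByRank_involutive (h := h) a, pairByRank_lt_pairByRank_iff (iff_of_false hy.1 hPa)]
    exact hy.2
  · intro y hy
    simp only [coe_filter, Set.mem_ofPred_eq, mem_compl] at hy ⊢
    refine ⟨fun hPy => pairByRank_mem_iff.1 hPy hy.1, ?_⟩
    rw [pairByRank_lt_pairByRank_iff (iff_of_true hy.1 ha)]
    exact hy.2

lemma lt_pairByRank (hballot : ∀ x, #{y ∈ sᶜ | y < x} ≤ #{y ∈ s | y < x}) {a : α}
    (ha : a ∈ s) : a < pairByRank h a := by
  by_contra! hle
  have hPa : pairByRank h a ∉ s := fun hPa => pairByRank_mem_iff.1 hPa ha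
  have hlt : pairByRank h a < a := lt_of_le_of_ne hle fun heq => hPa (heq.symm ▸ ha)
  -- below `a`, the complement holds its elements below the partner of `a`, and the partner too
  have : #{y ∈ sᶜ | y < pairByRank h a} < #{y ∈ sᶜ | y < a} := by
    refine card_lt_card ⟨fun y hy => ?_, fun hsub => ?_⟩
    · simp only [mem_filter] at hy ⊢
      exact ⟨hy.1, hy.2.trans hlt⟩
    · have := hsub (mem_filter.2 ⟨mem_compl.2 hPa, hlt⟩)
      simp at this
  have := hballot a
  rw [card_compl_lt_pairByRank ha] at *
  omega

lemma openers_pairByRank (hballot : ∀ x, #{y ∈ sᶜ | y < x} ≤ #{y ∈ s | y < x}) :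
    openers (pairByRank h) = s := by
  ext i
  rw [mem_openers]
  refine ⟨fun hi => ?_, lt_pairByRank hballot⟩
  by_contra hi'
  have := lt_pairByRank (h := h) hballot (pairByRank_mem_iff (h := h) |>.2 hi')
  rw [pairByRank_involutive] at this
  exact lt_asymm hi this

end Finset

def IsDyckSet {m : ℕ} (s : Finset (Fin m)) : Prop :=
  #s = #sᶜ ∧ ∀ k : ℕ, #{i ∈ sᶜ | i.val < k} ≤ #{i ∈ s | i.val < k}

lemma IsDyckSet.ballot {m : ℕ} {s : Finset (Fin m)} (hs : IsDyckSet s) (x : Fin m) :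
    #{y ∈ sᶜ | y < x} ≤ #{y ∈ s | y < x} :=
  hs.2 x

lemma Finset.isMatching_pairByRank {m : ℕ} {s : Finset (Fin m)} (h : #s = #sᶜ) :
    IsMatching (pairByRank h) :=
  ⟨pairByRank_involutive, fun i hi => by simpa [hi] using pairByRank_mem_iff (h := h) (i := i)⟩

namespace IsMatching

variable {m : ℕ} {f : Fin m → Fin m}

lemma apply_lt_of_not_lt (hf : IsMatching f) {i : Fin m} (hi : ¬ i < f i) : f i < i :=
  lt_of_le_of_ne (not_lt.1 hi) (hf.2 i)

lemma image_openers (hf : IsMatching f) : f '' openers f = ↑(openers f)ᶜ := by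
  ext c
  simp only [Set.mem_image, mem_coe, mem_openers, coe_compl, Set.mem_compl_iff, not_lt]
  constructor
  · rintro ⟨a, ha, rfl⟩
    rw [hf.1 a]
    exact ha.le
  · intro hc
    refine ⟨f c, ?_, hf.1 c⟩
    rw [hf.1 c]
    exact lt_of_le_of_ne hc (hf.2 c)

lemma card_openers (hf : IsMatching f) : #(openers f) = #(openers f)ᶜ := by
  refine card_nbij' f f (fun i hi => ?_) (fun i hi => ?_) (fun i _ => hf.1 i) (fun i _ => hf.1 i)
  · simp only [coe_compl, Set.mem_compl_iff, mem_coe, mem_openers] at hi ⊢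
    rw [hf.1 i]
    exact hi.le.not_gt
  · simp only [coe_compl, Set.mem_compl_iff, mem_coe, mem_openers] at hi ⊢
    rw [hf.1 i]
    exact hf.apply_lt_of_not_lt hi

lemma isDyckSet_openers (hf : IsMatching f) : IsDyckSet (openers f) := by
  refine ⟨hf.card_openers, fun k =>
    card_le_card_of_injOn f (fun i hi => ?_) hf.1.injective.injOn⟩
  simp only [coe_filter, mem_compl, mem_openers, Set.mem_ofPred_eq] at hi ⊢
  have hfi := hf.apply_lt_of_not_lt hi.1
  exact ⟨by rwa [hf.1 i], lt_trans hfi hi.2⟩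

/-- Both `f` and `pairByRank` map the openers increasingly onto the closers; on a well-order such
a map is determined by its range. -/
lemma eq_pairByRank_openers (hf : IsMatching f) (hmono : StrictMonoOn f (openers f)) :
    f = pairByRank hf.card_openers := by
  have hopen : ∀ i : openers f, f i = pairByRank hf.card_openers i := by
    suffices (fun i : openers f => f i) = fun i => (rankIso hf.card_openers i : Fin m) by
      intro i
      rw [pairByRank_of_mem i.2]
      exact congrFun this i
    refine (StrictMono.range_inj (fun (a b : openers f) hab => hmono a.2 b.2 hab)
      (fun (a b : openers f) hab => (rankIso hf.card_openers).strictMono hab)).1 ?_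
    rw [show Set.range (fun i : openers f => f i) = f '' openers f by ext; simp,
      hf.image_openers]
    exact ((rankIso hf.card_openers).surjective.range_comp Subtype.val ▸ Subtype.range_coe).symm
  funext i
  by_cases hi : i ∈ openers f
  · exact hopen ⟨i, hi⟩
  · have hfi : f i ∈ openers f := by
      rw [mem_openers, hf.1 i]
      exact hf.apply_lt_of_not_lt (by simpa using hi)
    have := congrArg (pairByRank hf.card_openers) (hopen ⟨f i, hfi⟩)
    rw [hf.1 i, pairByRank_involutive] at this
    exact this.symm

end IsMatching

lemma avoids_p1221_iff {m : ℕ} {f : Fin m → Fin m} (hf : Function.Involutive f) :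
    Avoids p1221 f ↔ StrictMonoOn f (openers f) := by
  constructor
  · intro havoid a ha b hb hab
    simp only [mem_coe, mem_openers] at ha hb
    by_contra hnest
    have hba : f b < f a := lt_of_le_of_ne (not_lt.1 hnest) (hf.injective.ne hab.ne')
    refine havoid ⟨![a, b, f b, f a], ?_, ?_⟩
    · rw [Fin.strictMono_iff_lt_succ]
      intro i
      fin_cases i
      exacts [hab, hb, hba]
    · intro p
      fin_cases p <;> simp [p1221, hf a, hf b]
  · rintro hmono ⟨g, hg, hocc⟩
    have h0 : f (g 0) = g 3 := hocc 0
    have h1 : f (g 1) = g 2 := hocc 1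
    have h3 : g 3 < g 2 := by
      rw [← h0, ← h1]
      refine hmono ?_ ?_ (hg (by decide))
      · simpa [h0] using hg (show (0 : Fin 4) < 3 by decide)
      · simpa [h1] using hg (show (1 : Fin 4) < 2 by decide)
    exact lt_asymm h3 (hg (by decide))

def nonnestingMatchingEquivDyckSet (m : ℕ) :
    {f : Fin m → Fin m // IsMatching f ∧ Avoids p1221 f} ≃ {s : Finset (Fin m) // IsDyckSet s}
    where
  toFun f := ⟨openers f.1, f.2.1.isDyckSet_openers⟩
  invFun s := ⟨pairByRank s.2.1, isMatching_pairByRank s.2.1,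
    (avoids_p1221_iff pairByRank_involutive).2
      (by rw [openers_pairByRank s.2.ballot]; exact strictMonoOn_pairByRank)⟩
  left_inv f := Subtype.ext
    (f.2.1.eq_pairByRank_openers ((avoids_p1221_iff f.2.1.1).1 f.2.2)).symm
  right_inv s := Subtype.ext (openers_pairByRank s.2.ballot)

def stepsOf {m : ℕ} (s : Finset (Fin m)) : List DyckStep :=
  List.ofFn fun i => if i ∈ s then U else D

section stepsOf

variable {m : ℕ} (s : Finset (Fin m))

lemma count_U_take_stepsOf (k : ℕ) :
    ((stepsOf s).take k).count U = #{i ∈ s | i.val < k} := by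
  rw [stepsOf, List.count_take_ofFn]
  congr 1
  ext i
  by_cases hi : i ∈ s <;> simp [hi, and_comm]

lemma count_D_take_stepsOf (k : ℕ) :
    ((stepsOf s).take k).count D = #{i ∈ sᶜ | i.val < k} := by
  rw [stepsOf, List.count_take_ofFn]
  congr 1
  ext i
  by_cases hi : i ∈ s <;> simp [hi, and_comm]

lemma count_U_stepsOf : (stepsOf s).count U = #s := by
  simpa [List.take_of_length_le, stepsOf] using count_U_take_stepsOf s m

lemma count_D_stepsOf : (stepsOf s).count D = #sᶜ := by
  simpa [List.take_of_length_le, stepsOf] using count_D_take_stepsOf s m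

lemma isDyckSet_iff : IsDyckSet s ↔ (stepsOf s).count U = (stepsOf s).count D ∧
    ∀ k, ((stepsOf s).take k).count D ≤ ((stepsOf s).take k).count U := by
  simp only [IsDyckSet, count_U_stepsOf, count_D_stepsOf, count_U_take_stepsOf,
    count_D_take_stepsOf]

end stepsOf

def IsDyckSet.toDyckWord {m : ℕ} {s : Finset (Fin m)} (hs : IsDyckSet s) : DyckWord :=
  ⟨stepsOf s, ((isDyckSet_iff s).1 hs).1, ((isDyckSet_iff s).1 hs).2⟩

lemma IsDyckSet.semilength_toDyckWord {n : ℕ} {s : Finset (Fin (2 * n))} (hs : IsDyckSet s) :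
    hs.toDyckWord.semilength = n := by
  have hcard := card_add_card_compl s
  rw [Fintype.card_fin] at hcard
  have := hs.1
  simp only [DyckWord.semilength, IsDyckSet.toDyckWord, count_U_stepsOf]
  omega

namespace DyckWord

def upSet (p : DyckWord) (m : ℕ) : Finset (Fin m) := {i | p.toList[i.val]? = some U}

variable {p : DyckWord}

lemma length_eq_two_mul {n : ℕ} (hp : p.semilength = n) : p.toList.length = 2 * n := by
  rw [← p.two_mul_semilength_eq_length, hp]

lemma stepsOf_upSet {m : ℕ} (hm : p.toList.length = m) : stepsOf (p.upSet m) = p.toList := by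
  refine List.ext_getElem (by simp [stepsOf, hm]) fun i hi hi' => ?_
  rcases DyckStep.dichotomy p.toList[i] with h | h <;> simp [stepsOf, upSet, h, hi']

lemma isDyckSet_upSet {m : ℕ} (hm : p.toList.length = m) : IsDyckSet (p.upSet m) := by
  rw [isDyckSet_iff, stepsOf_upSet hm]
  exact ⟨p.count_U_eq_count_D, p.count_D_le_count_U⟩

end DyckWord

def dyckSetEquivDyckWord (n : ℕ) :
    {s : Finset (Fin (2 * n)) // IsDyckSet s} ≃ {p : DyckWord // p.semilength = n} where
  toFun s := ⟨s.2.toDyckWord, s.2.semilength_toDyckWord⟩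
  invFun p := ⟨p.1.upSet (2 * n), DyckWord.isDyckSet_upSet (DyckWord.length_eq_two_mul p.2)⟩
  left_inv s := by
    ext i
    simp [DyckWord.upSet, IsDyckSet.toDyckWord, stepsOf]
  right_inv p := Subtype.ext (DyckWord.ext (DyckWord.stepsOf_upSet
    (DyckWord.length_eq_two_mul p.2)))

theorem card_avoid_1221 (n : ℕ) :
    Nat.card {f : Fin (2 * n) → Fin (2 * n) // IsMatching f ∧ Avoids p1221 f} =
      catalan n := by
  rw [Nat.card_congr ((nonnestingMatchingEquivDyckSet _).trans (dyckSetEquivDyckWord n)),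
    Nat.card_eq_fintype_card, DyckWord.card_dyckWord_semilength_eq_catalan]
end

section
/- For n ≥ 2, the number of matchings of [2n] minimally containing the pattern 1212 satisfies the recurrence |μ_n(1212)| = Σ_{k=0}^{n-2} [ (2k+1)·C_k·C_{n-k-2} + C_k·|μ_{n-k-1}(1212)| ], where C_m is the m-th Catalan number. -/
/-!
Deleting the rightmost arc `(p, 2n - 1)` of a matching of `[2n]` that minimally contains `1212`
leaves a noncrossing matching `N` of `[2n - 2]` in which the gap `p` lies under an arc of `N`.
Conversely, joining a covered gap of a noncrossing `N` to a new last point creates a crossing, and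
every crossing then uses the new arc. Hence `|μ_{d+1}|` is the total number of covered gaps over
the noncrossing matchings of `[2d]`. Split such a matching at its first arc `(0, 2i + 1)` into the
noncrossing matchings `σ` inside it and `τ` to its right: the gaps `1, …, 2i + 1` are covered by
the first arc, and the later gaps are covered exactly when they are covered in `τ`. Summing over
`σ` and `τ`, which are counted by Catalan numbers, gives the recurrence.
-/

open Function Set

section Transport

variable {α β : Type*}

open Classical in
/-- The fallback `y` is a junk value, never reached when `range g` is `f`-invariant. -/
noncomputable def restrictAlong (g : α → β) (f : β → β) (y : α) : α :=
  if h : f (g y) ∈ range g then h.choose else y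

open Classical in
noncomputable def extendAlong (g : α → β) (σ : α → α) (τ : β → β) (x : β) : β :=
  if h : x ∈ range g then g (σ h.choose) else τ x

variable {g : α → β} {σ : α → α} {f τ : β → β}

theorem semiconj_restrictAlong (hf : ∀ y, f (g y) ∈ range g) :
    Semiconj g (restrictAlong g f) f := fun y => by
  rw [restrictAlong, dif_pos (hf y)]
  exact (hf y).choose_spec

theorem restrictAlong_eq (hg : Injective g) (h : Semiconj g σ f) : restrictAlong g f = σ :=
  funext fun y => hg <| (semiconj_restrictAlong (fun y => ⟨σ y, h y⟩) y).trans (h y).symm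

theorem semiconj_extendAlong (hg : Injective g) : Semiconj g σ (extendAlong g σ τ) := fun y => by
  have hy : g y ∈ range g := mem_range_self y
  rw [extendAlong, dif_pos hy, hg hy.choose_spec]

theorem extendAlong_of_notMem {x : β} (hx : x ∉ range g) : extendAlong g σ τ x = τ x :=
  dif_neg hx

end Transport

def IsCrossing {α : Type*} [LT α] (f : α → α) (a b : α) : Prop :=
  a < b ∧ b < f a ∧ f a < f b

section Crossings

variable {m M : ℕ} {g : Fin m → Fin M} {σ : Fin m → Fin m} {f : Fin M → Fin M}

theorem StrictMono.isCrossing_iff (hg : StrictMono g) (h : Semiconj g σ f) {a b : Fin m} :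
    IsCrossing f (g a) (g b) ↔ IsCrossing σ a b := by
  simp only [IsCrossing, ← h a, ← h b, hg.lt_iff_lt]

theorem HasCrossing.semiconj (hσ : HasCrossing σ) (hg : StrictMono g) (h : Semiconj g σ f) :
    HasCrossing f :=
  let ⟨a, b, hab⟩ := hσ
  ⟨g a, g b, (hg.isCrossing_iff h).2 hab⟩

theorem IsMatching.of_semiconj (hf : IsMatching f) (hg : Injective g) (h : Semiconj g σ f) :
    IsMatching σ :=
  ⟨fun y => hg (by rw [h, h, hf.1]), fun y hy => hf.2 (g y) (by rw [← h, hy])⟩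

theorem IsMatching.even (hf : IsMatching f) : Even M := by
  have h := Equiv.Perm.two_dvd_card_support (σ := hf.1.toPerm) (by ext x; simp [sq, hf.1 x])
  have hsupp : hf.1.toPerm.support = Finset.univ := by ext x; simpa using hf.2 x
  rw [hsupp, Finset.card_univ, Fintype.card_fin] at h
  exact even_iff_two_dvd.2 h

theorem IsMatching.mapsTo_Ioo (hf : IsMatching f) (hnc : ¬HasCrossing f) (a : Fin M) :
    MapsTo f (Ioo a (f a)) (Ioo a (f a)) := by
  rintro x ⟨hax, hxa⟩
  have hne_a : f x ≠ a := fun h => hxa.ne (by rw [← h, hf.1])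
  have hne_fa : f x ≠ f a := fun h => hax.ne' (hf.1.injective h)
  refine ⟨lt_of_le_of_ne (not_lt.1 fun h => hnc ⟨f x, a, h, ?_, ?_⟩) hne_a.symm,
    lt_of_le_of_ne (not_lt.1 fun h => hnc ⟨a, x, hax, hxa, h⟩) hne_fa⟩
  · rwa [hf.1]
  · rwa [hf.1]

theorem IsMatching.mapsTo_compl_Icc (hf : IsMatching f) (hnc : ¬HasCrossing f) (a : Fin M) :
    MapsTo f (Icc a (f a))ᶜ (Icc a (f a))ᶜ := by
  intro x hx hfx
  have haa : a ≤ f a := hfx.1.trans hfx.2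
  rcases eq_or_lt_of_le hfx.1 with h | h1
  · exact hx ⟨by rw [← hf.1 x, ← h]; exact haa, by rw [← hf.1 x, ← h]⟩
  rcases eq_or_lt_of_le hfx.2 with h | h2
  · exact hx (by rw [hf.1.injective h]; exact ⟨le_rfl, haa⟩)
  · exact hx (Ioo_subset_Icc_self (hf.1 x ▸ hf.mapsTo_Ioo hnc a ⟨h1, h2⟩))

end Crossings

def NoncrossingMatching (k : ℕ) : Type :=
  {f : Fin k → Fin k // IsMatching f ∧ ¬HasCrossing f}

instance (k : ℕ) : Finite (NoncrossingMatching k) := Subtype.finite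

noncomputable instance (k : ℕ) : Fintype (NoncrossingMatching k) := Fintype.ofFinite _

noncomputable def NoncrossingMatching.restrict {m M : ℕ} (f : NoncrossingMatching M)
    {g : Fin m → Fin M} (hg : StrictMono g) (hinv : ∀ y, f.1 (g y) ∈ range g) :
    NoncrossingMatching m :=
  ⟨restrictAlong g f.1, f.2.1.of_semiconj hg.injective (semiconj_restrictAlong hinv),
    fun h => f.2.2 (h.semiconj hg (semiconj_restrictAlong hinv))⟩

/-- Gap `p` sits just before vertex `p`, so a matching of `k` points has the gaps `0, …, k`. -/
def CoversGap {k : ℕ} (N : Fin k → Fin k) (p : ℕ) : Prop :=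
  ∃ a : Fin k, (a : ℕ) < p ∧ p ≤ N a

section Pattern

variable {M : ℕ} {f : Fin M → Fin M}

theorem isCrossing_of_semiconj_p1212 {g : Fin 4 → Fin M} (hg : StrictMono g)
    (h : ∀ p, f (g p) = g (p1212 p)) : IsCrossing f (g 0) (g 1) ∧ f (g 1) = g 3 := by
  have h0 : f (g 0) = g 2 := h 0
  have h1 : f (g 1) = g 3 := h 1
  exact ⟨⟨hg (by decide), h0 ▸ hg (by decide), h0 ▸ h1 ▸ hg (by decide)⟩, h1⟩

theorem semiconj_p1212_of_isCrossing (hf : Involutive f) {a b : Fin M} (hab : IsCrossing f a b) :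
    StrictMono ![a, b, f a, f b] ∧
      ∀ p, f (![a, b, f a, f b] p) = ![a, b, f a, f b] (p1212 p) := by
  obtain ⟨h1, h2, h3⟩ := hab
  refine ⟨Fin.strictMono_iff_lt_succ.2 fun i => ?_, fun p => ?_⟩
  · fin_cases i <;> simpa
  · fin_cases p <;> simp [p1212, hf a, hf b]

theorem minContains_p1212_iff {f : Fin (M + 1) → Fin (M + 1)} (hf : Involutive f) :
    MinContains p1212 f ↔ HasCrossing f ∧ ∀ a b, IsCrossing f a b → f b = Fin.last M := by
  refine and_congr ⟨fun ⟨g, hg, h⟩ => ⟨_, _, (isCrossing_of_semiconj_p1212 hg h).1⟩,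
    fun ⟨a, b, hab⟩ => ⟨_, semiconj_p1212_of_isCrossing hf hab⟩⟩
    ⟨fun hno a b hab => ?_, ?_⟩
  · by_contra hne
    obtain ⟨hg, h⟩ := semiconj_p1212_of_isCrossing hf hab
    have hlt : (f b : ℕ) < M := Fin.val_lt_last hne
    have hle : ∀ q, ![a, b, f a, f b] q ≤ f b := by
      obtain ⟨h1, h2, h3⟩ := hab
      intro q; fin_cases q <;> simp <;> order
    refine hno ⟨_, hg, h, fun p => ⟨?_, ?_⟩⟩
    · have := Fin.le_def.1 (hle p); omega
    · have := Fin.le_def.1 (hle (p1212 p)); rw [h]; omega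
  · rintro hall ⟨g, hg, h, havoid⟩
    obtain ⟨hc, h3⟩ := isCrossing_of_semiconj_p1212 hg h
    have := (havoid 3).1
    rw [← h3, hall _ _ hc, Fin.val_last] at this
    omega

end Pattern

section LastArc

variable {k : ℕ}

def lastArcEmb (p : Fin (k + 1)) (y : Fin k) : Fin (k + 2) := (p.succAbove y).castSucc

theorem lastArcEmb_strictMono (p : Fin (k + 1)) : StrictMono (lastArcEmb p) :=
  Fin.strictMono_castSucc.comp (Fin.strictMono_succAbove p)

theorem lastArcEmb_ne_castSucc (p : Fin (k + 1)) (y : Fin k) : lastArcEmb p y ≠ p.castSucc :=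
  fun h => p.succAbove_ne y (Fin.castSucc_injective _ h)

theorem lastArcEmb_ne_last (p : Fin (k + 1)) (y : Fin k) : lastArcEmb p y ≠ Fin.last (k + 1) :=
  Fin.castSucc_ne_last _

theorem lastArcEmb_cases (p : Fin (k + 1)) (x : Fin (k + 2)) :
    x = p.castSucc ∨ x = Fin.last (k + 1) ∨ ∃ y, x = lastArcEmb p y := by
  by_cases hL : x = Fin.last (k + 1)
  · exact .inr (.inl hL)
  obtain ⟨x', rfl⟩ := Fin.exists_castSucc_eq.2 hL
  by_cases hp : x' = p
  · exact .inl (hp ▸ rfl)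
  obtain ⟨y, rfl⟩ := Fin.exists_succAbove_eq hp
  exact .inr (.inr ⟨y, rfl⟩)

theorem lastArcEmb_lt_castSucc_iff {p : Fin (k + 1)} {y : Fin k} :
    lastArcEmb p y < p.castSucc ↔ (y : ℕ) < p := by
  rw [lastArcEmb, Fin.castSucc_lt_castSucc_iff, Fin.succAbove_lt_iff_castSucc_lt, Fin.lt_def,
    Fin.val_castSucc]

theorem castSucc_lt_lastArcEmb_iff {p : Fin (k + 1)} {y : Fin k} :
    p.castSucc < lastArcEmb p y ↔ (p : ℕ) ≤ y := by
  rw [lastArcEmb, Fin.castSucc_lt_castSucc_iff, Fin.lt_succAbove_iff_le_castSucc, Fin.le_def,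
    Fin.val_castSucc]

noncomputable def addLastArc (N : Fin k → Fin k) (p : Fin (k + 1)) :
    Fin (k + 2) → Fin (k + 2) :=
  extendAlong (lastArcEmb p) N (Equiv.swap p.castSucc (Fin.last (k + 1)))

variable {N : Fin k → Fin k} {p : Fin (k + 1)}

theorem semiconj_addLastArc : Semiconj (lastArcEmb p) N (addLastArc N p) :=
  semiconj_extendAlong (lastArcEmb_strictMono p).injective

theorem addLastArc_lastArcEmb (y : Fin k) :
    addLastArc N p (lastArcEmb p y) = lastArcEmb p (N y) :=
  (semiconj_addLastArc y).symm

theorem addLastArc_castSucc : addLastArc N p p.castSucc = Fin.last (k + 1) := by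
  rw [addLastArc, extendAlong_of_notMem fun ⟨y, hy⟩ => lastArcEmb_ne_castSucc p y hy,
    Equiv.swap_apply_left]

theorem addLastArc_last : addLastArc N p (Fin.last (k + 1)) = p.castSucc := by
  rw [addLastArc, extendAlong_of_notMem fun ⟨y, hy⟩ => lastArcEmb_ne_last p y hy,
    Equiv.swap_apply_right]

theorem addLastArc_eq {f : Fin (k + 2) → Fin (k + 2)} (h : Semiconj (lastArcEmb p) N f)
    (hp : f p.castSucc = Fin.last (k + 1)) (hL : f (Fin.last (k + 1)) = p.castSucc) :
    addLastArc N p = f := by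
  funext x
  rcases lastArcEmb_cases p x with rfl | rfl | ⟨y, rfl⟩
  · rw [addLastArc_castSucc, hp]
  · rw [addLastArc_last, hL]
  · rw [addLastArc_lastArcEmb, h]

theorem isMatching_addLastArc (hN : IsMatching N) : IsMatching (addLastArc N p) := by
  constructor
  · intro x
    rcases lastArcEmb_cases p x with rfl | rfl | ⟨y, rfl⟩
    · rw [addLastArc_castSucc, addLastArc_last]
    · rw [addLastArc_last, addLastArc_castSucc]
    · rw [addLastArc_lastArcEmb, addLastArc_lastArcEmb, hN.1]
  · intro x
    rcases lastArcEmb_cases p x with rfl | rfl | ⟨y, rfl⟩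
    · rw [addLastArc_castSucc]; exact (Fin.castSucc_ne_last p).symm
    · rw [addLastArc_last]; exact Fin.castSucc_ne_last p
    · rw [addLastArc_lastArcEmb]; exact fun h => hN.2 y ((lastArcEmb_strictMono p).injective h)

theorem exists_isCrossing_addLastArc_ne_last :
    (∃ a b, IsCrossing (addLastArc N p) a b ∧ addLastArc N p b ≠ Fin.last (k + 1)) ↔
      HasCrossing N := by
  have hiff (a b : Fin k) :=
    (lastArcEmb_strictMono p).isCrossing_iff (semiconj_addLastArc (N := N)) (a := a) (b := b)
  constructor
  · rintro ⟨a, b, ⟨hab, hbfa, hfafb⟩, hne⟩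
    rcases lastArcEmb_cases p a with rfl | rfl | ⟨a', rfl⟩
    · rw [addLastArc_castSucc] at hfafb; exact absurd hfafb (not_lt.2 (Fin.le_last _))
    · exact absurd hab (not_lt.2 (Fin.le_last _))
    rcases lastArcEmb_cases p b with rfl | rfl | ⟨b', rfl⟩
    · exact absurd addLastArc_castSucc hne
    · exact absurd hbfa (not_lt.2 (Fin.le_last _))
    exact ⟨a', b', (hiff a' b').1 ⟨hab, hbfa, hfafb⟩⟩
  · rintro ⟨a, b, hab⟩
    exact ⟨_, _, (hiff a b).2 hab, by rw [addLastArc_lastArcEmb]; exact lastArcEmb_ne_last p _⟩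

theorem exists_isCrossing_addLastArc_eq_last (hN : IsMatching N) :
    (∃ a b, IsCrossing (addLastArc N p) a b ∧ addLastArc N p b = Fin.last (k + 1)) ↔
      CoversGap N p := by
  constructor
  · rintro ⟨a, b, ⟨hab, hbfa, -⟩, hb⟩
    obtain rfl : b = p.castSucc := by
      rw [← (isMatching_addLastArc hN).1 b, hb, addLastArc_last]
    rcases lastArcEmb_cases p a with rfl | rfl | ⟨a', rfl⟩
    · exact absurd hab (lt_irrefl _)
    · exact absurd hab (not_lt.2 (Fin.le_last _))
    rw [addLastArc_lastArcEmb] at hbfa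
    exact ⟨a', lastArcEmb_lt_castSucc_iff.1 hab, castSucc_lt_lastArcEmb_iff.1 hbfa⟩
  · rintro ⟨a, ha, hNa⟩
    refine ⟨lastArcEmb p a, p.castSucc, ⟨lastArcEmb_lt_castSucc_iff.2 ha, ?_, ?_⟩,
      addLastArc_castSucc⟩
    · rw [addLastArc_lastArcEmb]; exact castSucc_lt_lastArcEmb_iff.2 hNa
    · rw [addLastArc_lastArcEmb, addLastArc_castSucc]; exact Fin.castSucc_lt_last _

theorem minContains_addLastArc_iff (hN : IsMatching N) :
    MinContains p1212 (addLastArc N p) ↔ ¬HasCrossing N ∧ CoversGap N p := by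
  rw [minContains_p1212_iff (isMatching_addLastArc hN).1,
    ← exists_isCrossing_addLastArc_ne_last (N := N) (p := p),
    ← exists_isCrossing_addLastArc_eq_last hN]
  constructor
  · rintro ⟨⟨a, b, hab⟩, hall⟩
    exact ⟨fun ⟨a, b, h, hne⟩ => hne (hall a b h), a, b, hab, hall a b hab⟩
  · rintro ⟨hne, a, b, hab, -⟩
    exact ⟨⟨a, b, hab⟩, fun a b h => by_contra fun h' => hne ⟨a, b, h, h'⟩⟩

def lastPartner {f : Fin (k + 2) → Fin (k + 2)} (hf : IsMatching f) : Fin (k + 1) :=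
  (f (Fin.last _)).castPred (hf.2 _)

theorem castSucc_lastPartner {f : Fin (k + 2) → Fin (k + 2)} (hf : IsMatching f) :
    (lastPartner hf).castSucc = f (Fin.last _) :=
  Fin.castSucc_castPred _ _

theorem mem_range_lastArcEmb_apply {f : Fin (k + 2) → Fin (k + 2)} (hf : IsMatching f)
    (y : Fin k) : f (lastArcEmb (lastPartner hf) y) ∈ range (lastArcEmb (lastPartner hf)) := by
  rcases lastArcEmb_cases (lastPartner hf) (f (lastArcEmb (lastPartner hf) y))
    with h | h | ⟨z, hz⟩
  · rw [castSucc_lastPartner] at h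
    exact absurd (hf.1.injective h) (lastArcEmb_ne_last _ y)
  · rw [← hf.1 (Fin.last _), ← castSucc_lastPartner hf] at h
    exact absurd (hf.1.injective h) (lastArcEmb_ne_castSucc _ y)
  · exact ⟨z, hz.symm⟩

noncomputable def lastArcEquiv :
    {f : Fin (k + 2) → Fin (k + 2) // IsMatching f} ≃
      {N : Fin k → Fin k // IsMatching N} × Fin (k + 1) where
  toFun f :=
    (⟨restrictAlong (lastArcEmb (lastPartner f.2)) f.1,
      f.2.of_semiconj (lastArcEmb_strictMono _).injective
        (semiconj_restrictAlong (mem_range_lastArcEmb_apply f.2))⟩, lastPartner f.2)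
  invFun x := ⟨addLastArc x.1.1 x.2, isMatching_addLastArc x.1.2⟩
  left_inv := fun ⟨f, hf⟩ => Subtype.ext <|
    addLastArc_eq (semiconj_restrictAlong (mem_range_lastArcEmb_apply hf))
      (by rw [castSucc_lastPartner]; exact hf.1 _) (castSucc_lastPartner hf).symm
  right_inv := fun ⟨⟨N, hN⟩, p⟩ => by
    have hp : lastPartner (isMatching_addLastArc hN) = p :=
      Fin.castSucc_injective _ (by rw [castSucc_lastPartner, addLastArc_last])
    refine Prod.ext (Subtype.ext ?_) hp
    dsimp only
    rw [hp]
    exact restrictAlong_eq (lastArcEmb_strictMono p).injective semiconj_addLastArc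

end LastArc

section Counting

open Classical in
noncomputable def coveredGaps {k : ℕ} (N : Fin k → Fin k) : Finset ℕ :=
  {p ∈ Finset.range (k + 1) | CoversGap N p}

theorem card_coversGap {k : ℕ} (N : Fin k → Fin k) :
    Nat.card {p : Fin (k + 1) // CoversGap N p} = (coveredGaps N).card := by
  classical
  rw [coveredGaps, Finset.card_filter, ← Fin.sum_univ_eq_sum_range, ← Finset.card_filter,
    Nat.card_eq_fintype_card, Fintype.card_subtype]

noncomputable def minContainsEquiv (k : ℕ) :
    {f : Fin (k + 2) → Fin (k + 2) // IsMatching f ∧ MinContains p1212 f} ≃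
      Σ N : NoncrossingMatching k, {p : Fin (k + 1) // CoversGap N.1 p} :=
  ((Equiv.subtypeSubtypeEquivSubtypeInter _ _).symm.trans
    (lastArcEquiv.symm.subtypeEquiv fun x => (minContains_addLastArc_iff x.1.2).symm).symm).trans
  { toFun x := ⟨⟨x.1.1.1, x.1.1.2, x.2.1⟩, x.1.2, x.2.2⟩
    invFun y := ⟨(⟨y.1.1, y.1.2.1⟩, y.2.1), y.1.2.2, y.2.2⟩ }

theorem card_minContains (k : ℕ) :
    Nat.card {f : Fin (k + 2) → Fin (k + 2) // IsMatching f ∧ MinContains p1212 f} =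
      ∑ N : NoncrossingMatching k, (coveredGaps N.1).card := by
  simp only [Nat.card_congr (minContainsEquiv k), Nat.card_sigma, card_coversGap]

end Counting

def shiftEmb {j n : ℕ} (c : ℕ) (h : c + j ≤ n) (y : Fin j) : Fin n := ⟨c + y, by omega⟩

section Shift

variable {j n c : ℕ} {h : c + j ≤ n}

theorem shiftEmb_strictMono : StrictMono (shiftEmb c h) := fun _ _ hab => by
  simp only [shiftEmb, Fin.lt_def] at hab ⊢; omega

theorem val_shiftEmb (y : Fin j) : (shiftEmb c h y : ℕ) = c + y := rfl

theorem mem_range_shiftEmb {x : Fin n} :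
    x ∈ range (shiftEmb c h) ↔ c ≤ x ∧ (x : ℕ) < c + j := by
  constructor
  · rintro ⟨y, rfl⟩; simp only [val_shiftEmb]; omega
  · rintro ⟨h1, h2⟩
    exact ⟨⟨x - c, by omega⟩, Fin.ext (by simp only [val_shiftEmb]; omega)⟩

end Shift

theorem IsMatching.odd_apply_zero {M : ℕ} [NeZero M] {f : Fin M → Fin M} (hf : IsMatching f)
    (hnc : ¬HasCrossing f) : Odd (f 0 : ℕ) := by
  have hpos : 0 < (f 0 : ℕ) := Fin.pos_iff_ne_zero.2 (hf.2 0)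
  -- `f` restricts to a matching of the `f 0 - 1` points strictly inside the arc `(0, f 0)`.
  let g : Fin (f 0 - 1) → Fin M := shiftEmb 1 (by omega)
  have hrange : ∀ x, x ∈ range g ↔ x ∈ Ioo 0 (f 0) := fun x => by
    rw [mem_range_shiftEmb, mem_Ioo, Fin.lt_def, Fin.lt_def, Fin.val_zero]; omega
  have hinv : ∀ y, f (g y) ∈ range g := fun y =>
    (hrange _).2 (hf.mapsTo_Ioo hnc 0 ((hrange _).1 (mem_range_self y)))
  have := (hf.of_semiconj shiftEmb_strictMono.injective (semiconj_restrictAlong hinv)).even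
  obtain ⟨r, hr⟩ := this
  exact ⟨r, by omega⟩

section FirstArc

variable {m : ℕ}

def innerEmb (i : Fin (m + 1)) : Fin (2 * i) → Fin (2 * (m + 1)) :=
  shiftEmb 1 (by have := i.isLt; omega)

def outerEmb (i : Fin (m + 1)) : Fin (2 * (m - i)) → Fin (2 * (m + 1)) :=
  shiftEmb (2 * i + 2) (by have := i.isLt; omega)

def arcEnd (i : Fin (m + 1)) : Fin (2 * (m + 1)) := ⟨2 * i + 1, by have := i.isLt; omega⟩

variable {i : Fin (m + 1)}

theorem mem_range_innerEmb {x : Fin (2 * (m + 1))} :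
    x ∈ range (innerEmb i) ↔ 0 < (x : ℕ) ∧ (x : ℕ) < 2 * i + 1 := by
  rw [innerEmb, mem_range_shiftEmb]; omega

theorem mem_range_outerEmb {x : Fin (2 * (m + 1))} :
    x ∈ range (outerEmb i) ↔ 2 * i + 1 < (x : ℕ) := by
  rw [outerEmb, mem_range_shiftEmb]; have := x.isLt; omega

theorem innerEmb_strictMono : StrictMono (innerEmb i) := shiftEmb_strictMono

theorem outerEmb_strictMono : StrictMono (outerEmb i) := shiftEmb_strictMono

theorem firstArc_cases (x : Fin (2 * (m + 1))) :
    x = 0 ∨ x = arcEnd i ∨ (∃ y, x = innerEmb i y) ∨ ∃ y, x = outerEmb i y := by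
  rcases Nat.lt_trichotomy (x : ℕ) (2 * i + 1) with h | h | h
  · rcases Nat.eq_zero_or_pos (x : ℕ) with h0 | h0
    · exact .inl (Fin.ext h0)
    · obtain ⟨y, hy⟩ := mem_range_innerEmb.2 ⟨h0, h⟩
      exact .inr (.inr (.inl ⟨y, hy.symm⟩))
  · exact .inr (.inl (Fin.ext h))
  · obtain ⟨y, hy⟩ := mem_range_outerEmb.2 h; exact .inr (.inr (.inr ⟨y, hy.symm⟩))

theorem val_innerEmb (y : Fin (2 * i)) : (innerEmb i y : ℕ) = 1 + y := rfl

theorem val_outerEmb (y : Fin (2 * (m - i))) : (outerEmb i y : ℕ) = 2 * i + 2 + y := rfl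

theorem val_arcEnd : (arcEnd i : ℕ) = 2 * i + 1 := rfl

noncomputable def firstArcGlue (i : Fin (m + 1)) (σ : Fin (2 * i) → Fin (2 * i))
    (τ : Fin (2 * (m - i)) → Fin (2 * (m - i))) : Fin (2 * (m + 1)) → Fin (2 * (m + 1)) :=
  extendAlong (innerEmb i) σ (extendAlong (outerEmb i) τ (Equiv.swap 0 (arcEnd i)))

variable {σ : Fin (2 * i) → Fin (2 * i)} {τ : Fin (2 * (m - i)) → Fin (2 * (m - i))}

theorem semiconj_firstArcGlue_inner : Semiconj (innerEmb i) σ (firstArcGlue i σ τ) :=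
  semiconj_extendAlong innerEmb_strictMono.injective

theorem semiconj_firstArcGlue_outer : Semiconj (outerEmb i) τ (firstArcGlue i σ τ) := fun y => by
  rw [firstArcGlue, extendAlong_of_notMem (by rw [mem_range_innerEmb, val_outerEmb]; omega),
    semiconj_extendAlong outerEmb_strictMono.injective]

theorem firstArcGlue_zero : firstArcGlue i σ τ 0 = arcEnd i := by
  rw [firstArcGlue, extendAlong_of_notMem (by rw [mem_range_innerEmb, Fin.val_zero]; omega),
    extendAlong_of_notMem (by rw [mem_range_outerEmb, Fin.val_zero]; omega),
    Equiv.swap_apply_left]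

theorem firstArcGlue_arcEnd : firstArcGlue i σ τ (arcEnd i) = 0 := by
  rw [firstArcGlue, extendAlong_of_notMem (by rw [mem_range_innerEmb, val_arcEnd]; omega),
    extendAlong_of_notMem (by rw [mem_range_outerEmb, val_arcEnd]; omega),
    Equiv.swap_apply_right]

theorem firstArcGlue_innerEmb (y : Fin (2 * i)) :
    firstArcGlue i σ τ (innerEmb i y) = innerEmb i (σ y) :=
  (semiconj_firstArcGlue_inner y).symm

theorem firstArcGlue_outerEmb (y : Fin (2 * (m - i))) :
    firstArcGlue i σ τ (outerEmb i y) = outerEmb i (τ y) :=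
  (semiconj_firstArcGlue_outer y).symm

theorem firstArcGlue_eq {f : Fin (2 * (m + 1)) → Fin (2 * (m + 1))}
    (hin : Semiconj (innerEmb i) σ f) (hout : Semiconj (outerEmb i) τ f) (h0 : f 0 = arcEnd i)
    (h1 : f (arcEnd i) = 0) : firstArcGlue i σ τ = f := by
  funext x
  rcases firstArc_cases (i := i) x with rfl | rfl | ⟨y, rfl⟩ | ⟨y, rfl⟩
  · rw [firstArcGlue_zero, h0]
  · rw [firstArcGlue_arcEnd, h1]
  · rw [firstArcGlue_innerEmb, hin]
  · rw [firstArcGlue_outerEmb, hout]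

theorem isMatching_firstArcGlue (hσ : IsMatching σ) (hτ : IsMatching τ) :
    IsMatching (firstArcGlue i σ τ) := by
  constructor
  · intro x
    rcases firstArc_cases (i := i) x with rfl | rfl | ⟨y, rfl⟩ | ⟨y, rfl⟩
    · rw [firstArcGlue_zero, firstArcGlue_arcEnd]
    · rw [firstArcGlue_arcEnd, firstArcGlue_zero]
    · rw [firstArcGlue_innerEmb, firstArcGlue_innerEmb, hσ.1]
    · rw [firstArcGlue_outerEmb, firstArcGlue_outerEmb, hτ.1]
  · intro x
    rcases firstArc_cases (i := i) x with rfl | rfl | ⟨y, rfl⟩ | ⟨y, rfl⟩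
    · rw [firstArcGlue_zero, Ne, Fin.ext_iff, val_arcEnd]; simp
    · rw [firstArcGlue_arcEnd, Ne, Fin.ext_iff, val_arcEnd]; simp
    · rw [firstArcGlue_innerEmb]; exact fun h => hσ.2 y (innerEmb_strictMono.injective h)
    · rw [firstArcGlue_outerEmb]; exact fun h => hτ.2 y (outerEmb_strictMono.injective h)

theorem not_hasCrossing_firstArcGlue (hσ : ¬HasCrossing σ) (hτ : ¬HasCrossing τ) :
    ¬HasCrossing (firstArcGlue i σ τ) := by
  rintro ⟨a, b, hc⟩
  obtain ⟨hab, hbfa, hfafb⟩ := id hc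
  rw [Fin.lt_def] at hab hbfa hfafb
  rcases firstArc_cases (i := i) a with rfl | rfl | ⟨a', rfl⟩ | ⟨a', rfl⟩
  · rw [firstArcGlue_zero, val_arcEnd] at hbfa hfafb
    obtain ⟨b', rfl⟩ : b ∈ range (innerEmb i) := mem_range_innerEmb.2 ⟨by omega, hbfa⟩
    rw [firstArcGlue_innerEmb, val_innerEmb] at hfafb
    have := (σ b').isLt
    omega
  · rw [firstArcGlue_arcEnd, Fin.val_zero] at hbfa
    omega
  · rw [firstArcGlue_innerEmb, val_innerEmb] at hbfa
    rw [val_innerEmb] at hab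
    have := (σ a').isLt
    obtain ⟨b', rfl⟩ : b ∈ range (innerEmb i) := mem_range_innerEmb.2 ⟨by omega, by omega⟩
    exact hσ ⟨a', b', (innerEmb_strictMono.isCrossing_iff semiconj_firstArcGlue_inner).1 hc⟩
  · rw [val_outerEmb] at hab
    obtain ⟨b', rfl⟩ : b ∈ range (outerEmb i) := mem_range_outerEmb.2 (by omega)
    exact hτ ⟨a', b', (outerEmb_strictMono.isCrossing_iff semiconj_firstArcGlue_outer).1 hc⟩

theorem coversGap_firstArcGlue_of_le {p : ℕ} (hp : p ≤ 2 * i + 1) :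
    CoversGap (firstArcGlue i σ τ) p ↔ 0 < p := by
  refine ⟨fun ⟨a, ha, _⟩ => by omega, fun hp0 => ⟨0, hp0, ?_⟩⟩
  rw [firstArcGlue_zero, val_arcEnd]
  exact hp

theorem coversGap_firstArcGlue_add {q : ℕ} :
    CoversGap (firstArcGlue i σ τ) (2 * i + 2 + q) ↔ CoversGap τ q := by
  constructor
  · rintro ⟨a, ha, hfa⟩
    rcases firstArc_cases (i := i) a with rfl | rfl | ⟨a', rfl⟩ | ⟨a', rfl⟩
    · rw [firstArcGlue_zero, val_arcEnd] at hfa; omega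
    · rw [firstArcGlue_arcEnd, Fin.val_zero] at hfa; omega
    · rw [firstArcGlue_innerEmb, val_innerEmb] at hfa; have := (σ a').isLt; omega
    · rw [firstArcGlue_outerEmb, val_outerEmb] at hfa
      rw [val_outerEmb] at ha
      exact ⟨a', by omega, by omega⟩
  · rintro ⟨a, ha, hfa⟩
    refine ⟨outerEmb i a, ?_, ?_⟩
    · rw [val_outerEmb]; omega
    · rw [firstArcGlue_outerEmb, val_outerEmb]; omega

section Decomposition

variable {f : Fin (2 * (m + 1)) → Fin (2 * (m + 1))} (hf : IsMatching f) (hnc : ¬HasCrossing f)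
  (h0 : f 0 = arcEnd i)
include hf hnc h0

theorem mem_range_innerEmb_apply (y : Fin (2 * i)) : f (innerEmb i y) ∈ range (innerEmb i) := by
  have hrange : ∀ x, x ∈ range (innerEmb i) ↔ x ∈ Ioo 0 (f 0) := fun x => by
    rw [mem_range_innerEmb, mem_Ioo, h0, Fin.lt_def, Fin.lt_def, Fin.val_zero, val_arcEnd]
  exact (hrange _).2 (hf.mapsTo_Ioo hnc 0 ((hrange _).1 (mem_range_self y)))

theorem mem_range_outerEmb_apply (y : Fin (2 * (m - i))) :
    f (outerEmb i y) ∈ range (outerEmb i) := by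
  have hrange : ∀ x, x ∈ range (outerEmb i) ↔ x ∈ (Icc 0 (f 0))ᶜ := fun x => by
    rw [mem_range_outerEmb, mem_compl_iff, mem_Icc, h0, Fin.le_def, Fin.le_def, Fin.val_zero,
      val_arcEnd]
    omega
  exact (hrange _).2 (hf.mapsTo_compl_Icc hnc 0 ((hrange _).1 (mem_range_self y)))

theorem firstArcGlue_restrictAlong :
    firstArcGlue i (restrictAlong (innerEmb i) f) (restrictAlong (outerEmb i) f) = f :=
  firstArcGlue_eq (semiconj_restrictAlong (mem_range_innerEmb_apply hf hnc h0))
    (semiconj_restrictAlong (mem_range_outerEmb_apply hf hnc h0)) h0 (by rw [← h0, hf.1])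

end Decomposition

end FirstArc

section FirstArcCount

open Finset

variable {m : ℕ}

def firstArcIndex (f : Fin (2 * (m + 1)) → Fin (2 * (m + 1))) : Fin (m + 1) :=
  ⟨((f 0 : ℕ) - 1) / 2, by have := (f 0).isLt; omega⟩

theorem val_firstArcIndex (f : Fin (2 * (m + 1)) → Fin (2 * (m + 1))) :
    (firstArcIndex f : ℕ) = ((f 0 : ℕ) - 1) / 2 := rfl

theorem apply_zero_eq_arcEnd {f : Fin (2 * (m + 1)) → Fin (2 * (m + 1))} {i : Fin (m + 1)}
    (hf : IsMatching f) (hnc : ¬HasCrossing f) (hi : firstArcIndex f = i) : f 0 = arcEnd i := by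
  obtain ⟨r, hr⟩ := hf.odd_apply_zero hnc
  rw [Fin.ext_iff, val_firstArcIndex] at hi
  rw [Fin.ext_iff, val_arcEnd]
  omega

theorem firstArcIndex_firstArcGlue {i : Fin (m + 1)} (σ : Fin (2 * i) → Fin (2 * i))
    (τ : Fin (2 * (m - i)) → Fin (2 * (m - i))) : firstArcIndex (firstArcGlue i σ τ) = i := by
  rw [Fin.ext_iff, val_firstArcIndex, firstArcGlue_zero, val_arcEnd]
  omega

noncomputable def firstArcFiberEquiv (i : Fin (m + 1)) :
    {f : NoncrossingMatching (2 * (m + 1)) // firstArcIndex f.1 = i} ≃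
      NoncrossingMatching (2 * i) × NoncrossingMatching (2 * (m - i)) where
  toFun f :=
    have h0 : f.1.1 0 = arcEnd i := apply_zero_eq_arcEnd f.1.2.1 f.1.2.2 f.2
    (f.1.restrict innerEmb_strictMono (mem_range_innerEmb_apply f.1.2.1 f.1.2.2 h0),
      f.1.restrict outerEmb_strictMono (mem_range_outerEmb_apply f.1.2.1 f.1.2.2 h0))
  invFun x :=
    ⟨⟨firstArcGlue i x.1.1 x.2.1, isMatching_firstArcGlue x.1.2.1 x.2.2.1,
        not_hasCrossing_firstArcGlue x.1.2.2 x.2.2.2⟩,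
      firstArcIndex_firstArcGlue _ _⟩
  left_inv f := Subtype.ext <| Subtype.ext <|
    firstArcGlue_restrictAlong f.1.2.1 f.1.2.2 (apply_zero_eq_arcEnd f.1.2.1 f.1.2.2 f.2)
  right_inv _ := Prod.ext
    (Subtype.ext (restrictAlong_eq innerEmb_strictMono.injective semiconj_firstArcGlue_inner))
    (Subtype.ext (restrictAlong_eq outerEmb_strictMono.injective semiconj_firstArcGlue_outer))

noncomputable def firstArcEquiv (m : ℕ) :
    NoncrossingMatching (2 * (m + 1)) ≃
      Σ i : Fin (m + 1), NoncrossingMatching (2 * i) × NoncrossingMatching (2 * (m - i)) :=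
  (Equiv.sigmaFiberEquiv fun f => firstArcIndex f.1).symm.trans
    (Equiv.sigmaCongrRight firstArcFiberEquiv)

theorem card_noncrossingMatching (m : ℕ) :
    Nat.card (NoncrossingMatching (2 * m)) = catalan m := by
  induction m using Nat.strong_induction_on with
  | _ m ih =>
    cases m with
    | zero =>
      have : Unique (NoncrossingMatching (2 * 0)) :=
        { default := ⟨id, ⟨fun _ => rfl, fun x => x.elim0⟩, fun ⟨a, _⟩ => a.elim0⟩
          uniq := fun f => Subtype.ext (funext fun x => x.elim0) }
      rw [Nat.card_unique, catalan_zero]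
    | succ m =>
      rw [Nat.card_congr (firstArcEquiv m), Nat.card_sigma, catalan_succ]
      refine sum_congr rfl fun i _ => ?_
      rw [Nat.card_prod, ih i (by omega), ih (m - i) (by omega)]

theorem card_coveredGaps_firstArcGlue {i : Fin (m + 1)} (σ : Fin (2 * i) → Fin (2 * i))
    (τ : Fin (2 * (m - i)) → Fin (2 * (m - i))) :
    #(coveredGaps (firstArcGlue i σ τ)) = 2 * i + 1 + #(coveredGaps τ) := by
  classical
  rw [coveredGaps, coveredGaps, card_filter, card_filter,
    show 2 * (m + 1) + 1 = (2 * i + 2) + (2 * (m - i) + 1) by omega, sum_range_add]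
  congr 1
  · have hcov (p : ℕ) (hp : p ∈ range (2 * i + 1)) :
        CoversGap (firstArcGlue i σ τ) (p + 1) :=
      (coversGap_firstArcGlue_of_le (by rw [Finset.mem_range] at hp; omega)).2 p.succ_pos
    rw [sum_range_succ', sum_congr rfl fun p hp => if_pos (hcov p hp),
      if_neg fun h => ((coversGap_firstArcGlue_of_le (by omega)).1 h).false]
    simp
  · exact sum_congr rfl fun q _ => if_congr coversGap_firstArcGlue_add rfl rfl

theorem sum_card_coveredGaps_succ (m : ℕ) :
    ∑ N : NoncrossingMatching (2 * (m + 1)), #(coveredGaps N.1) =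
      ∑ i : Fin (m + 1), ((2 * i + 1) * catalan i * catalan (m - i) +
        catalan i * ∑ N : NoncrossingMatching (2 * (m - i)), #(coveredGaps N.1)) := by
  rw [← (firstArcEquiv m).symm.sum_comp, Fintype.sum_sigma]
  refine sum_congr rfl fun i _ => ?_
  rw [Fintype.sum_prod_type]
  change ∑ σ : NoncrossingMatching (2 * i), ∑ τ : NoncrossingMatching (2 * (m - i)),
    #(coveredGaps (firstArcGlue i σ.1 τ.1)) = _
  simp only [card_coveredGaps_firstArcGlue, sum_add_distrib, sum_const, card_univ, smul_eq_mul,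
    ← Nat.card_eq_fintype_card, card_noncrossingMatching]
  ring

end FirstArcCount

open Finset in
theorem mu_1212_recurrence (n : ℕ) (hn : 2 ≤ n) :
    Nat.card {f : Fin (2 * n) → Fin (2 * n) // IsMatching f ∧ MinContains p1212 f} =
      ∑ k ∈ range (n - 1),
        ((2 * k + 1) * catalan k * catalan (n - k - 2) +
          catalan k *
            Nat.card {f : Fin (2 * (n - k - 1)) → Fin (2 * (n - k - 1)) //
              IsMatching f ∧ MinContains p1212 f}) := by
  obtain ⟨m, rfl⟩ : ∃ m, n = m + 2 := ⟨n - 2, by omega⟩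
  have hμ (d : ℕ) : Nat.card {f : Fin (2 * (d + 1)) → Fin (2 * (d + 1)) //
      IsMatching f ∧ MinContains p1212 f} =
        ∑ N : NoncrossingMatching (2 * d), #(coveredGaps N.1) :=
    card_minContains (2 * d)
  rw [hμ (m + 1), sum_card_coveredGaps_succ, show m + 2 - 1 = m + 1 by omega,
    Fin.sum_univ_eq_sum_range (fun k => (2 * k + 1) * catalan k * catalan (m - k) +
      catalan k * ∑ N : NoncrossingMatching (2 * (m - k)), #(coveredGaps N.1))]
  refine sum_congr rfl fun k hk => ?_
  rw [Finset.mem_range] at hk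
  rw [show m + 2 - k - 2 = m - k by omega, show m + 2 - k - 1 = m - k + 1 by omega, hμ]
end
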